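/- arXiv:2106.02919 — 4 statements merged into one kernel-verified Lean document; each statement's English description precedes it below -/
import Mathlib

section
/- Let G be a connected simple graph with vertex set V(G) and edge set E(G) such that |E(G)| is even and the maximum degree of G is at most 3. Then the number of perfect matchings of the line graph L(G) equals 2^(|E(G)| - |V(G)| + 1). -/
variable {V : Type*}

/-- The vertex-edge graph (middle graph) of `G`: vertices are `V(G) ⊕ E(G)`;
two `e`-vertices are adjacent iff the corresponding edges of `G` are distinct and share
an endpoint; a `v`-vertex and an `e`-vertex are adjacent iff the vertex is an endpoint of
the edge; no two `v`-vertices are adjacent. -/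
def middleGraph (G : SimpleGraph V) : SimpleGraph (V ⊕ G.edgeSet) where
  Adj a b :=
    match a, b with
    | Sum.inl _, Sum.inl _ => False
    | Sum.inl u, Sum.inr e => u ∈ (e : Sym2 V)
    | Sum.inr e, Sum.inl u => u ∈ (e : Sym2 V)
    | Sum.inr e, Sum.inr f => e ≠ f ∧ ∃ v, v ∈ (e : Sym2 V) ∧ v ∈ (f : Sym2 V)
  symm := by
    constructor
    rintro (u | e) (v | f) h
    · exact h.elim
    · exact h
    · exact h
    · exact ⟨h.1.symm, h.2.imp fun v hv => ⟨hv.2, hv.1⟩⟩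
  loopless := by
    constructor
    rintro (u | e) h
    · exact h
    · exact h.1 rfl

/-- The line graph of `G`, with vertex set the edge set of `G`; two edges are adjacent
iff they are distinct and share an endpoint. -/
def lineGraph (G : SimpleGraph V) : SimpleGraph G.edgeSet where
  Adj e f := e ≠ f ∧ ∃ v, v ∈ (e : Sym2 V) ∧ v ∈ (f : Sym2 V)
  symm := ⟨fun e f h => ⟨h.1.symm, h.2.imp fun v hv => ⟨hv.2, hv.1⟩⟩⟩
  loopless := ⟨fun e h => h.1 rfl⟩

/-- `P` is a perfect matching (dimer covering) of `H`, viewed as a set of edges: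
all members are edges of `H`, distinct members share no vertex, and every vertex of `H`
lies in some member. -/
def IsPerfMatchSet {W : Type*} (H : SimpleGraph W) (P : Set (Sym2 W)) : Prop :=
  P ⊆ H.edgeSet ∧
  (∀ p ∈ P, ∀ q ∈ P, p ≠ q → ∀ a, a ∈ p → a ∉ q) ∧
  (∀ w : W, ∃ p ∈ P, w ∈ p)

/-- The number of perfect matchings (dimer coverings) of `H`. -/
noncomputable def pmCount {W : Type*} (H : SimpleGraph W) : ℕ :=
  {P : Set (Sym2 W) | IsPerfMatchSet H P}.ncard

/-!
A perfect matching of `L(G)` pairs each edge `e` with a partner sharing an endpoint; sending `e`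
to that common endpoint gives an orientation `σ : E → V` (each edge is sent to one of its ends)
in which every vertex receives an even number of edges. Conversely, when all degrees are at most
`3` every nonempty fibre of such an even orientation has exactly two edges, and these pairs form a
perfect matching of `L(G)`; the two constructions are inverse to each other.

Orientations are the flips `x : E → 𝔽₂` of a fixed reference orientation, and the parity vector
of the flipped orientation is the reference one plus `∂x`, where `∂ : 𝔽₂^E → 𝔽₂^V` is the mod-2
boundary map. So even orientations are the solutions of a linear system `∂x = b`. For connected
`G` the range of `∂` is the hyperplane of vectors with coordinate sum `0` (the vectors `δᵤ + δᵥ` are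
boundaries of walks), which contains `b` because `|E|` is even. The solutions thus form a coset of
`ker ∂`, whose dimension is `|E| - (|V| - 1)`.
-/

open Finset

lemma Finset.even_card_of_involution {α : Type*} (s : Finset α) (g : α → α)
    (hg : ∀ a ∈ s, g a ∈ s) (hne : ∀ a ∈ s, g a ≠ a) (hinv : ∀ a ∈ s, g (g a) = a) :
    Even #s := by
  have : ∑ _a ∈ s, (1 : ZMod 2) = 0 :=
    sum_involution (fun a _ => g a) (fun _ _ => by decide) (fun a ha _ => hne a ha) hg hinv
  simpa [ZMod.natCast_eq_zero_iff_even] using this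

lemma Sym2.eq_of_mem_of_mem_of_ne {α : Type*} {e f : Sym2 α} {a b : α} (hef : e ≠ f)
    (hae : a ∈ e) (haf : a ∈ f) (hbe : b ∈ e) (hbf : b ∈ f) : a = b := by
  by_contra hab
  exact hef (((Sym2.mem_and_mem_iff hab).1 ⟨hae, hbe⟩).trans
    ((Sym2.mem_and_mem_iff hab).1 ⟨haf, hbf⟩).symm)

lemma Sym2.mk_out {α : Type*} (z : Sym2 α) : s(z.out.1, z.out.2) = z := Quot.out_eq z

lemma Sym2.out_fst_ne_out_snd {α : Type*} {z : Sym2 α} (hz : ¬z.IsDiag) : z.out.1 ≠ z.out.2 :=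
  fun h => hz (z.mk_out ▸ Sym2.mk_isDiag_iff.2 h)

lemma IsPerfMatchSet.eq_of_subset {W : Type*} {H : SimpleGraph W} {P Q : Set (Sym2 W)}
    (hP : IsPerfMatchSet H P) (hQ : IsPerfMatchSet H Q) (hPQ : P ⊆ Q) : P = Q := by
  refine hPQ.antisymm fun q hq => ?_
  obtain ⟨p, hp, hap⟩ := hP.2.2 q.out.1
  by_contra hqP
  exact hQ.2.1 p (hPQ hp) q hq (ne_of_mem_of_not_mem hp hqP) _ hap (Sym2.out_fst_mem q)

lemma LinearMap.ncard_fiber_of_mem_range {K M N : Type*} [DivisionRing K] [AddCommGroup M]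
    [Module K M] [Module.Finite K M] [AddCommGroup N] [Module K N] (f : M →ₗ[K] N) {b : N}
    (hb : b ∈ LinearMap.range f) :
    {x | f x = b}.ncard = Nat.card K ^ Module.finrank K (LinearMap.ker f) := by
  obtain ⟨x₀, rfl⟩ := hb
  rw [← Nat.card_coe_set_eq, ← Module.natCard_eq_pow_finrank]
  exact Nat.card_congr (f.toAddMonoidHom.fiberEquivKer x₀)

namespace LineGraphMatching

section Matching

variable {G : SimpleGraph V}

variable (G) in
def matchingOf (σ : G.edgeSet → V) : Set (Sym2 G.edgeSet) :=
  {p | ∃ e f, e ≠ f ∧ σ e = σ f ∧ s(e, f) = p}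

@[simp]
lemma mk_mem_matchingOf {σ : G.edgeSet → V} {e f : G.edgeSet} :
    s(e, f) ∈ matchingOf G σ ↔ e ≠ f ∧ σ e = σ f := by
  refine ⟨?_, fun h => ⟨e, f, h.1, h.2, rfl⟩⟩
  rintro ⟨e', f', hne, hσ, heq⟩
  rcases Sym2.eq_iff.1 heq with ⟨rfl, rfl⟩ | ⟨rfl, rfl⟩
  exacts [⟨hne, hσ⟩, ⟨hne.symm, hσ.symm⟩]

variable [Fintype V] [DecidableEq V] [DecidableRel G.Adj]

variable (G) in
def IsEvenOrientation (σ : G.edgeSet → V) : Prop :=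
  (∀ e : G.edgeSet, σ e ∈ (e : Sym2 V)) ∧ ∀ v, Even #{e | σ e = v}

lemma card_fiber_le_degree {σ : G.edgeSet → V} (hσ : ∀ e : G.edgeSet, σ e ∈ (e : Sym2 V))
    (v : V) : #{e | σ e = v} ≤ G.degree v := by
  rw [← G.card_incidenceFinset_eq_degree]
  refine card_le_card_of_injOn (↑) (fun e he => ?_) Subtype.val_injective.injOn
  simp only [coe_filter, mem_univ, true_and, Set.mem_ofPred_eq] at he
  simpa [← he] using ⟨e.2, hσ e⟩

lemma IsEvenOrientation.existsUnique_partner (hdeg : ∀ v, G.degree v ≤ 3)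
    {σ : G.edgeSet → V} (hσ : IsEvenOrientation G σ) (e : G.edgeSet) :
    ∃! f, f ≠ e ∧ σ f = σ e := by
  set F : Finset G.edgeSet := {g | σ g = σ e}
  have he : e ∈ F := by simp [F]
  have hF : #F = 2 := by
    have hle : #F ≤ 3 := (card_fiber_le_degree hσ.1 (σ e)).trans (hdeg (σ e))
    have hpos : 0 < #F := card_pos.2 ⟨e, he⟩
    obtain ⟨k, hk⟩ : Even #F := hσ.2 (σ e)
    omega
  obtain ⟨f, hf⟩ := card_eq_one.1 (by rw [card_erase_of_mem he, hF] : #(F.erase e) = 1)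
  have hpartner : ∀ g, g ≠ e ∧ σ g = σ e ↔ g = f := fun g => by
    simpa [F] using Finset.ext_iff.1 hf g
  exact ⟨f, (hpartner f).2 rfl, fun g hg => (hpartner g).1 hg⟩

lemma IsEvenOrientation.isPerfMatchSet_matchingOf (hdeg : ∀ v, G.degree v ≤ 3)
    {σ : G.edgeSet → V} (hσ : IsEvenOrientation G σ) :
    IsPerfMatchSet (lineGraph G) (matchingOf G σ) := by
  refine ⟨?_, ?_, fun e => ?_⟩
  · rintro _ ⟨e, f, hef, hσef, rfl⟩
    exact ⟨hef, σ e, hσ.1 e, hσef ▸ hσ.1 f⟩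
  · intro p hp q hq hpq a hap haq
    obtain ⟨b, rfl⟩ := Sym2.mem_iff_exists.1 hap
    obtain ⟨c, rfl⟩ := Sym2.mem_iff_exists.1 haq
    rw [mk_mem_matchingOf] at hp hq
    obtain ⟨f, -, hunique⟩ := hσ.existsUnique_partner hdeg a
    rw [hunique b ⟨hp.1.symm, hp.2.symm⟩, hunique c ⟨hq.1.symm, hq.2.symm⟩] at hpq
    exact hpq rfl
  · obtain ⟨f, ⟨hfe, hf⟩, -⟩ := hσ.existsUnique_partner hdeg e
    exact ⟨s(e, f), mk_mem_matchingOf.2 ⟨hfe.symm, hf.symm⟩, Sym2.mem_mk_left e f⟩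

lemma matchingOf_injOn (hdeg : ∀ v, G.degree v ≤ 3) :
    Set.InjOn (matchingOf G) {σ | IsEvenOrientation G σ} := by
  intro σ hσ τ hτ h
  funext e
  obtain ⟨f, ⟨hfe, hf⟩, -⟩ := IsEvenOrientation.existsUnique_partner hdeg hσ e
  have hτf : τ e = τ f :=
    (mk_mem_matchingOf.1 (h ▸ mk_mem_matchingOf.2 ⟨hfe.symm, hf.symm⟩)).2
  exact Sym2.eq_of_mem_of_mem_of_ne (Subtype.coe_ne_coe.2 hfe.symm) (hσ.1 e) (hf ▸ hσ.1 f)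
    (hτ.1 e) (hτf ▸ hτ.1 f)

lemma exists_isEvenOrientation_matchingOf_eq (hdeg : ∀ v, G.degree v ≤ 3)
    {P : Set (Sym2 G.edgeSet)} (hP : IsPerfMatchSet (lineGraph G) P) :
    ∃ σ, IsEvenOrientation G σ ∧ matchingOf G σ = P := by
  have hcover : ∀ e : G.edgeSet, ∃ f v, s(e, f) ∈ P ∧ v ∈ (e : Sym2 V) ∧ v ∈ (f : Sym2 V) := by
    intro e
    obtain ⟨p, hp, hep⟩ := hP.2.2 e
    obtain ⟨f, rfl⟩ := Sym2.mem_iff_exists.1 hep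
    obtain ⟨-, v, hve, hvf⟩ := hP.1 hp
    exact ⟨f, v, hp, hve, hvf⟩
  choose partner σ hmem hσe hσf using hcover
  have partner_ne : ∀ e, e ≠ partner e := fun e => (hP.1 (hmem e)).1
  have eq_partner : ∀ e f, s(e, f) ∈ P → f = partner e := fun e f hef => by
    by_contra hne
    exact hP.2.1 _ hef _ (hmem e) (fun h => hne (Sym2.congr_right.1 h)) e
      (Sym2.mem_mk_left e f) (Sym2.mem_mk_left e _)
  have partner_partner : ∀ e, partner (partner e) = e := fun e =>
    (eq_partner _ _ (Sym2.eq_swap ▸ hmem e)).symm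
  have σ_partner : ∀ e, σ (partner e) = σ e := fun e =>
    Sym2.eq_of_mem_of_mem_of_ne (Subtype.coe_ne_coe.2 (partner_ne e))
      (by simpa [partner_partner] using hσf (partner e)) (hσe _) (hσe e) (hσf e)
  have hσ : IsEvenOrientation G σ := ⟨hσe, fun v => Finset.even_card_of_involution _ partner
    (fun e he => by simpa [σ_partner] using he) (fun e _ => (partner_ne e).symm)
    (fun e _ => partner_partner e)⟩
  refine ⟨σ, hσ, (hP.eq_of_subset (hσ.isPerfMatchSet_matchingOf hdeg) fun p hp => ?_).symm⟩
  induction p using Sym2.ind with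
  | h e f =>
    rw [eq_partner e f hp]
    exact mk_mem_matchingOf.2 ⟨partner_ne e, (σ_partner e).symm⟩

lemma bijOn_matchingOf (hdeg : ∀ v, G.degree v ≤ 3) :
    Set.BijOn (matchingOf G) {σ | IsEvenOrientation G σ}
      {P | IsPerfMatchSet (lineGraph G) P} :=
  ⟨fun _ hσ => IsEvenOrientation.isPerfMatchSet_matchingOf hdeg hσ, matchingOf_injOn hdeg,
    fun _ hP => exists_isEvenOrientation_matchingOf_eq hdeg hP⟩

end Matching

section CoordSum

variable [Fintype V]

def coordSum : (V → ZMod 2) →ₗ[ZMod 2] ZMod 2 := ∑ v, LinearMap.proj v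

lemma coordSum_apply (y : V → ZMod 2) : coordSum y = ∑ v, y v := by
  simp [coordSum]

lemma finrank_ker_coordSum [Nonempty V] :
    Module.finrank (ZMod 2) (LinearMap.ker (coordSum (V := V))) = Fintype.card V - 1 := by
  classical
  obtain ⟨v₀⟩ := ‹Nonempty V›
  have hsurj : LinearMap.range (coordSum (V := V)) = ⊤ :=
    LinearMap.range_eq_top.2 fun c => ⟨Pi.single v₀ c, by simp [coordSum_apply]⟩
  have hrank := LinearMap.finrank_range_add_finrank_ker (coordSum (V := V))
  rw [hsurj, finrank_top, Module.finrank_self, Module.finrank_fintype_fun_eq_card] at hrank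
  omega

end CoordSum

section Boundary

variable [DecidableEq V]

def endpointVec : Sym2 V → V → ZMod 2 :=
  Sym2.lift ⟨fun a b => Pi.single a 1 + Pi.single b 1, fun _ _ => add_comm _ _⟩

@[simp]
lemma endpointVec_mk (a b : V) : endpointVec s(a, b) = Pi.single a 1 + Pi.single b 1 := rfl

lemma coordSum_endpointVec [Fintype V] (e : Sym2 V) : coordSum (endpointVec e) = 0 := by
  induction e using Sym2.ind with
  | h a b => simp [coordSum_apply, Finset.sum_add_distrib, ZModModule.add_self]

variable (G : SimpleGraph V) [Fintype G.edgeSet]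

def boundary : (G.edgeSet → ZMod 2) →ₗ[ZMod 2] V → ZMod 2 :=
  Fintype.linearCombination (ZMod 2) fun e => endpointVec (e : Sym2 V)

lemma single_add_single_mem_range_boundary {u w : V} (p : G.Walk u w) :
    Pi.single u 1 + Pi.single w 1 ∈ LinearMap.range (boundary G) := by
  induction p with
  | nil =>
    rw [ZModModule.add_self]
    exact Submodule.zero_mem _
  | @cons u a w hua p ih =>
    have hedge : Pi.single u 1 + Pi.single a 1 ∈ LinearMap.range (boundary G) := by
      rw [boundary, Fintype.range_linearCombination]
      exact Submodule.subset_span ⟨⟨s(u, a), hua⟩, rfl⟩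
    simpa only [ZModModule.add_add_add_cancel] using Submodule.add_mem _ hedge ih

variable [Fintype V]

lemma range_boundary_le_ker_coordSum :
    LinearMap.range (boundary G) ≤ LinearMap.ker coordSum := by
  rw [boundary, Fintype.range_linearCombination, Submodule.span_le]
  rintro _ ⟨e, rfl⟩
  exact coordSum_endpointVec _

lemma ker_coordSum_le_range_boundary (hG : G.Preconnected) :
    LinearMap.ker coordSum ≤ LinearMap.range (boundary G) := by
  intro y hy
  rcases isEmpty_or_nonempty V with hV | hV
  · rw [Subsingleton.elim y 0]
    exact Submodule.zero_mem _
  obtain ⟨v₀⟩ := hV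
  rw [LinearMap.mem_ker, coordSum_apply] at hy
  have hy : y = ∑ w, y w • (Pi.single v₀ 1 + Pi.single w 1) := by
    simp only [smul_add, sum_add_distrib, ← sum_smul, hy, zero_smul, zero_add]
    funext v
    simp [Finset.sum_apply, Pi.single_apply]
  rw [hy]
  exact Submodule.sum_mem _ fun w _ =>
    Submodule.smul_mem _ _ (single_add_single_mem_range_boundary G (hG v₀ w).some)

lemma range_boundary (hG : G.Preconnected) :
    LinearMap.range (boundary G) = LinearMap.ker coordSum :=
  le_antisymm (range_boundary_le_ker_coordSum G) (ker_coordSum_le_range_boundary G hG)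

lemma finrank_ker_boundary (hG : G.Connected) :
    Module.finrank (ZMod 2) (LinearMap.ker (boundary G)) =
      Fintype.card G.edgeSet + 1 - Fintype.card V := by
  have := hG.nonempty
  have hV : 0 < Fintype.card V := Fintype.card_pos
  have hrank := LinearMap.finrank_range_add_finrank_ker (boundary G)
  rw [range_boundary G hG.preconnected, finrank_ker_coordSum,
    Module.finrank_fintype_fun_eq_card] at hrank
  omega

end Boundary

section Orientations

variable {G : SimpleGraph V}

variable (G) in
noncomputable def orientationOf (x : G.edgeSet → ZMod 2) (e : G.edgeSet) : V :=
  if x e = 0 then (e : Sym2 V).out.1 else (e : Sym2 V).out.2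

lemma orientationOf_mem (x : G.edgeSet → ZMod 2) (e : G.edgeSet) :
    orientationOf G x e ∈ (e : Sym2 V) := by
  unfold orientationOf
  split_ifs
  exacts [Sym2.out_fst_mem _, Sym2.out_snd_mem _]

lemma orientationOf_injective : Function.Injective (orientationOf G) := by
  intro x y h
  funext e
  have hne := Sym2.out_fst_ne_out_snd (G.not_isDiag_of_mem_edgeSet e.2)
  have := congrFun h e
  unfold orientationOf at this
  rcases (show ∀ a : ZMod 2, a = 0 ∨ a = 1 by decide) (x e) with hx | hx <;>
  rcases (show ∀ a : ZMod 2, a = 0 ∨ a = 1 by decide) (y e) with hy | hy <;>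
  simp_all

lemma exists_orientationOf_eq [DecidableEq V] {σ : G.edgeSet → V}
    (hσ : ∀ e : G.edgeSet, σ e ∈ (e : Sym2 V)) : ∃ x, orientationOf G x = σ := by
  refine ⟨fun e => if σ e = (e : Sym2 V).out.1 then 0 else 1, funext fun e => ?_⟩
  by_cases h : σ e = (e : Sym2 V).out.1
  · simp [orientationOf, h]
  · have := hσ e
    rw [← Sym2.mk_out (e : Sym2 V), Sym2.mem_iff] at this
    simp only [orientationOf, if_neg h, one_ne_zero, if_false]
    exact (this.resolve_left h).symm

end Orientations

section Parity

variable [Fintype V] [DecidableEq V] {G : SimpleGraph V} [DecidableRel G.Adj]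

def inParity (σ : G.edgeSet → V) : V → ZMod 2 := ∑ e, Pi.single (σ e) 1

lemma inParity_eq_zero_iff {σ : G.edgeSet → V} :
    inParity σ = 0 ↔ ∀ v, Even #{e | σ e = v} := by
  simp only [funext_iff, inParity, Finset.sum_apply, Pi.single_apply, sum_boole, Pi.zero_apply,
    ZMod.natCast_eq_zero_iff_even]
  simp only [eq_comm]

lemma coordSum_inParity (σ : G.edgeSet → V) :
    coordSum (inParity σ) = Fintype.card G.edgeSet := by
  simp [coordSum_apply, inParity]

lemma inParity_orientationOf (x : G.edgeSet → ZMod 2) :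
    inParity (orientationOf G x) = inParity (orientationOf G 0) + boundary G x := by
  rw [inParity, inParity, boundary, Fintype.linearCombination_apply, ← sum_add_distrib]
  refine sum_congr rfl fun e _ => ?_
  have hvec : endpointVec (e : Sym2 V) =
      Pi.single (e : Sym2 V).out.1 1 + Pi.single (e : Sym2 V).out.2 1 := by
    rw [← endpointVec_mk, Sym2.mk_out]
  rcases (show ∀ a : ZMod 2, a = 0 ∨ a = 1 by decide) (x e) with hx | hx
  · simp [orientationOf, hx]
  · simp [orientationOf, hx, hvec, ← add_assoc, ZModModule.add_self]

lemma isEvenOrientation_orientationOf_iff (x : G.edgeSet → ZMod 2) :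
    IsEvenOrientation G (orientationOf G x) ↔ boundary G x = inParity (orientationOf G 0) := by
  rw [IsEvenOrientation, ← inParity_eq_zero_iff, inParity_orientationOf, add_eq_zero_iff_eq_neg,
    ZModModule.neg_eq_self, eq_comm]
  simp [orientationOf_mem]

variable (G) in
lemma bijOn_orientationOf :
    Set.BijOn (orientationOf G) {x | boundary G x = inParity (orientationOf G 0)}
      {σ | IsEvenOrientation G σ} := by
  refine ⟨fun x hx => (isEvenOrientation_orientationOf_iff x).2 hx,
    orientationOf_injective.injOn, fun σ hσ => ?_⟩
  obtain ⟨x, rfl⟩ := exists_orientationOf_eq hσ.1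
  exact ⟨x, (isEvenOrientation_orientationOf_iff x).1 hσ, rfl⟩

lemma inParity_mem_range_boundary (hG : G.Preconnected) (hE : Even (Fintype.card G.edgeSet))
    (σ : G.edgeSet → V) : inParity σ ∈ LinearMap.range (boundary G) := by
  rw [range_boundary G hG, LinearMap.mem_ker, coordSum_inParity, hE.natCast_zmod_two]

end Parity

end LineGraphMatching

/-- If `G` is a connected simple graph with an even number of edges and
maximum degree at most `3`, then the number of perfect matchings of the line graph `L(G)`
is `2 ^ (|E(G)| - |V(G)| + 1)`. -/
theorem line_graph_pm_count {V : Type*} [Fintype V] [DecidableEq V]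
    (G : SimpleGraph V) [DecidableRel G.Adj]
    (hconn : G.Connected) (heven : Even G.edgeFinset.card)
    (hdeg : ∀ v : V, G.degree v ≤ 3) :
    pmCount (lineGraph G) = 2 ^ (G.edgeFinset.card + 1 - Fintype.card V) := by
  rw [G.edgeFinset_card] at heven ⊢
  open LineGraphMatching in
  rw [pmCount, ← ((bijOn_matchingOf hdeg).comp (bijOn_orientationOf G)).ncard_eq,
    LinearMap.ncard_fiber_of_mem_range _
      (inParity_mem_range_boundary hconn.preconnected heven _),
    Nat.card_zmod, finrank_ker_boundary G hconn]
end

section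
/- Let H be a simple graph with a vertex u of degree 2 whose two neighbors x and y are distinct and non-adjacent in H. Let H' be the graph obtained from H by deleting u and adding the edge xy. Then the number of perfect matchings of the vertex-edge graph M(H) equals the number of perfect matchings of the vertex-edge graph M(H'). -/
variable {V : Type*}

/-!
In a perfect matching of `M(H)` the vertex `u` is matched to `ux` or to `uy`. Removing `u` and
`ux` leaves a copy of `M(H')` in which `uy` plays the role of the new edge `xy`; since `uy` only
meets `y` and the edges at `y`, that copy is `M(H')` with `xy` adjacent only to its neighbours
touching `y`. Every neighbour of `xy` in `M(H')` touches exactly one of `x` and `y` (`xy` is the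
only edge joining them), so the two cases together count each perfect matching of `M(H')` once.
-/

open SimpleGraph Function

lemma Sym2.mem_range_map_iff {α β : Type*} {g : α → β} {z : Sym2 β} :
    z ∈ Set.range (Sym2.map g) ↔ ∀ w ∈ z, w ∈ Set.range g := by
  refine ⟨?_, fun h => ?_⟩
  · rintro ⟨z, rfl⟩ w hw
    obtain ⟨a, -, rfl⟩ := Sym2.mem_map.1 hw
    exact Set.mem_range_self a
  · induction z using Sym2.ind with
    | h a b =>
      obtain ⟨a', rfl⟩ := h a (Sym2.mem_mk_left _ _)
      obtain ⟨b', rfl⟩ := h b (Sym2.mem_mk_right _ _)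
      exact ⟨s(a', b'), rfl⟩

namespace SimpleGraph

variable {V W W' : Type*} {G : SimpleGraph W}

lemma mem_edgeSet_comap_iff {g : W' → W} {q : Sym2 W'} :
    q ∈ (G.comap g).edgeSet ↔ q.map g ∈ G.edgeSet := by
  induction q using Sym2.ind with
  | h => exact Iff.rfl

lemma mem_edgeSet_induce_sup_fromEdgeSet_iff {H : SimpleGraph V} {S : Set V} {x y : S}
    (hxy : x ≠ y) (e : Sym2 S) :
    e ∈ (H.induce S ⊔ fromEdgeSet {s(x, y)}).edgeSet ↔
      e.map Subtype.val ∈ H.edgeSet ∨ e = s(x, y) := by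
  induction e using Sym2.ind with
  | h a b =>
    rcases eq_or_ne a b with rfl | hab
    · simp
      exact ⟨fun h h' => hxy (h.symm.trans h'), fun h h' => hxy (h'.symm.trans h)⟩
    · simp [hab]

lemma eq_or_eq_of_degree_eq_two {G : SimpleGraph V} {u x y : V} [Fintype (G.neighborSet u)]
    (hdeg : G.degree u = 2) (hux : G.Adj u x) (huy : G.Adj u y) (hxy : x ≠ y) {v : V}
    (huv : G.Adj u v) : v = x ∨ v = y := by
  classical
  have hsub : ({x, y} : Finset V) ⊆ G.neighborFinset u := by
    simp [Finset.insert_subset_iff, hux, huy]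
  have heq := Finset.eq_of_subset_of_card_le hsub (by
    rw [card_neighborFinset_eq_degree, hdeg, Finset.card_pair hxy])
  simpa [← heq] using (G.mem_neighborFinset u v).2 huv

def restrictAt (G : SimpleGraph W) (c : W) (S : Set W) : SimpleGraph W where
  Adj a b := G.Adj a b ∧ (a = c → b ∈ S) ∧ (b = c → a ∈ S)
  symm := ⟨fun _ _ h => ⟨h.1.symm, h.2.2, h.2.1⟩⟩
  loopless := ⟨fun _ h => G.irrefl h.1⟩

@[simp]
lemma restrictAt_adj {c : W} {S : Set W} {a b : W} :
    (G.restrictAt c S).Adj a b ↔ G.Adj a b ∧ (a = c → b ∈ S) ∧ (b = c → a ∈ S) :=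
  Iff.rfl

lemma mem_edgeSet_restrictAt {c : W} {S : Set W} {e : Sym2 W} :
    e ∈ (G.restrictAt c S).edgeSet ↔ e ∈ G.edgeSet ∧ ∀ b, e = s(c, b) → b ∈ S := by
  induction e using Sym2.ind with
  | h a b =>
    simp only [mem_edgeSet, restrictAt, Sym2.eq_iff]
    aesop

end SimpleGraph

section PerfectMatchings

variable {W W' : Type*} {G : SimpleGraph W} {P : Set (Sym2 W)} {g : W' → W} {a b : W}

lemma apply_notMem_of_range_eq_compl_pair (hrange : Set.range g = {a, b}ᶜ) (c : W') :
    g c ∉ s(a, b) := by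
  have : g c ∈ ({a, b}ᶜ : Set W) := hrange ▸ Set.mem_range_self c
  simpa [Sym2.mem_iff] using this

lemma mem_range_of_range_eq_compl_pair (hrange : Set.range g = {a, b}ᶜ) {w : W}
    (hw : w ∉ s(a, b)) : w ∈ Set.range g := by
  rw [hrange]
  simpa [Sym2.mem_iff] using hw

namespace IsPerfMatchSet

lemma adj (hP : IsPerfMatchSet G P) (h : s(a, b) ∈ P) : G.Adj a b := hP.1 h

lemma eq_of_mem (hP : IsPerfMatchSet G P) {p q : Sym2 W} (hp : p ∈ P) (hq : q ∈ P)
    (hap : a ∈ p) (haq : a ∈ q) : p = q :=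
  by_contra fun hpq => hP.2.1 p hp q hq hpq a hap haq

lemma existsUnique_partner (hP : IsPerfMatchSet G P) (c : W) : ∃! b, s(c, b) ∈ P := by
  obtain ⟨p, hp, hcp⟩ := hP.2.2 c
  obtain ⟨b, rfl⟩ := Sym2.mem_iff_exists.1 hcp
  exact ⟨b, hp, fun b' hb' =>
    Sym2.congr_right.1 (hP.eq_of_mem hb' hp (Sym2.mem_mk_left c b') (Sym2.mem_mk_left c b))⟩

lemma insert_image (hg : Injective g) (hrange : Set.range g = {a, b}ᶜ) (hab : G.Adj a b)
    {Q : Set (Sym2 W')} (hQ : IsPerfMatchSet (G.comap g) Q) :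
    IsPerfMatchSet G (insert s(a, b) (Sym2.map g '' Q)) := by
  refine ⟨?_, ?_, fun w => ?_⟩
  · rintro _ (rfl | ⟨q, hq, rfl⟩)
    · exact hab
    · exact mem_edgeSet_comap_iff.1 (hQ.1 hq)
  · rintro _ (rfl | ⟨q, hq, rfl⟩) _ (rfl | ⟨q', hq', rfl⟩) hne w hw hw'
    · exact hne rfl
    · obtain ⟨c, -, rfl⟩ := Sym2.mem_map.1 hw'
      exact apply_notMem_of_range_eq_compl_pair hrange c hw
    · obtain ⟨c, -, rfl⟩ := Sym2.mem_map.1 hw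
      exact apply_notMem_of_range_eq_compl_pair hrange c hw'
    · obtain ⟨c, hc, rfl⟩ := Sym2.mem_map.1 hw
      obtain ⟨c', hc', hcc'⟩ := Sym2.mem_map.1 hw'
      rw [hg hcc'] at hc'
      exact hne (congrArg _ (hQ.eq_of_mem hq hq' hc hc'))
  · by_cases hw : w ∈ s(a, b)
    · exact ⟨s(a, b), Set.mem_insert _ _, hw⟩
    · obtain ⟨c, rfl⟩ := mem_range_of_range_eq_compl_pair hrange hw
      obtain ⟨q, hq, hcq⟩ := hQ.2.2 c
      exact ⟨_, Set.mem_insert_of_mem _ ⟨q, hq, rfl⟩, Sym2.mem_map.2 ⟨c, hcq, rfl⟩⟩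

lemma mem_range_map (hrange : Set.range g = {a, b}ᶜ) (hP : IsPerfMatchSet G P)
    (habP : s(a, b) ∈ P) {p : Sym2 W} (hp : p ∈ P) (hne : p ≠ s(a, b)) :
    p ∈ Set.range (Sym2.map g) :=
  Sym2.mem_range_map_iff.2 fun _ hv => mem_range_of_range_eq_compl_pair hrange fun hv' =>
    hne (hP.eq_of_mem hp habP hv hv')

lemma preimage (hg : Injective g) (hrange : Set.range g = {a, b}ᶜ) (hP : IsPerfMatchSet G P)
    (habP : s(a, b) ∈ P) : IsPerfMatchSet (G.comap g) (Sym2.map g ⁻¹' P) := by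
  refine ⟨fun q hq => mem_edgeSet_comap_iff.2 (hP.1 hq), ?_, fun c => ?_⟩
  · intro q hq q' hq' hne c hc hc'
    exact hP.2.1 _ hq _ hq' (fun h => hne (Sym2.map.injective hg h)) (g c)
      (Sym2.mem_map.2 ⟨c, hc, rfl⟩) (Sym2.mem_map.2 ⟨c, hc', rfl⟩)
  · obtain ⟨p, hp, hcp⟩ := hP.2.2 (g c)
    have hne : p ≠ s(a, b) := fun h => apply_notMem_of_range_eq_compl_pair hrange c (h ▸ hcp)
    obtain ⟨q, rfl⟩ := hP.mem_range_map hrange habP hp hne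
    obtain ⟨c', hc', hcc'⟩ := Sym2.mem_map.1 hcp
    exact ⟨q, hp, hg hcc' ▸ hc'⟩

lemma insert_image_preimage (hrange : Set.range g = {a, b}ᶜ) (hP : IsPerfMatchSet G P)
    (habP : s(a, b) ∈ P) : insert s(a, b) (Sym2.map g '' (Sym2.map g ⁻¹' P)) = P := by
  rw [Set.image_preimage_eq_inter_range]
  refine Set.Subset.antisymm (Set.insert_subset habP Set.inter_subset_left) fun p hp => ?_
  by_cases hne : p = s(a, b)
  · exact hne ▸ Set.mem_insert _ _
  · exact Set.mem_insert_of_mem _ ⟨hp, hP.mem_range_map hrange habP hp hne⟩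

end IsPerfMatchSet

lemma isPerfMatchSet_restrictAt_iff {c : W} {S : Set W} :
    IsPerfMatchSet (G.restrictAt c S) P ↔ IsPerfMatchSet G P ∧ ∀ b, s(c, b) ∈ P → b ∈ S := by
  constructor
  · rintro ⟨hE, hdisj, hcov⟩
    exact ⟨⟨fun p hp => (mem_edgeSet_restrictAt.1 (hE hp)).1, hdisj, hcov⟩,
      fun b hb => (mem_edgeSet_restrictAt.1 (hE hb)).2 b rfl⟩
  · rintro ⟨⟨hE, hdisj, hcov⟩, hS⟩
    exact ⟨fun p hp => mem_edgeSet_restrictAt.2 ⟨hE hp, fun b hb => hS b (hb ▸ hp)⟩, hdisj, hcov⟩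

lemma isPerfMatchSet_restrictAt_singleton_iff {c b : W} :
    IsPerfMatchSet (G.restrictAt c {b}) P ↔ IsPerfMatchSet G P ∧ s(c, b) ∈ P := by
  rw [isPerfMatchSet_restrictAt_iff]
  refine and_congr_right fun hP => ⟨fun h => ?_, fun h b' hb' => ?_⟩
  · obtain ⟨b', hb', -⟩ := hP.existsUnique_partner c
    rwa [← h b' hb']
  · exact (hP.existsUnique_partner c).unique hb' h

lemma pmCount_eq_add_restrictAt [Finite W] (c : W) {S T : Set W}
    (hST : ∀ b, G.Adj c b → (b ∈ S ↔ b ∉ T)) :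
    pmCount G = pmCount (G.restrictAt c S) + pmCount (G.restrictAt c T) := by
  have hsplit : {P | IsPerfMatchSet G P} =
      {P | IsPerfMatchSet (G.restrictAt c S) P} ∪ {P | IsPerfMatchSet (G.restrictAt c T) P} := by
    ext P
    simp only [Set.mem_union, Set.mem_ofPred_eq, isPerfMatchSet_restrictAt_iff]
    refine ⟨fun hP => ?_, by rintro (⟨hP, -⟩ | ⟨hP, -⟩) <;> exact hP⟩
    obtain ⟨b, hb, huniq⟩ := hP.existsUnique_partner c
    by_cases hbS : b ∈ S
    · exact Or.inl ⟨hP, fun b' hb' => huniq b' hb' ▸ hbS⟩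
    · exact Or.inr ⟨hP, fun b' hb' => huniq b' hb' ▸ not_not.1 (mt (hST b (hP.adj hb)).2 hbS)⟩
  have hdisj : Disjoint {P | IsPerfMatchSet (G.restrictAt c S) P}
      {P | IsPerfMatchSet (G.restrictAt c T) P} := by
    refine Set.disjoint_left.2 fun P hPS hPT => ?_
    obtain ⟨hP, hS⟩ := isPerfMatchSet_restrictAt_iff.1 hPS
    obtain ⟨b, hb, -⟩ := hP.existsUnique_partner c
    exact (hST b (hP.adj hb)).1 (hS b hb) ((isPerfMatchSet_restrictAt_iff.1 hPT).2 b hb)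
  rw [pmCount, hsplit, Set.ncard_union_eq hdisj]
  rfl

lemma pmCount_restrictAt_singleton_eq_comap (hg : Injective g) (hrange : Set.range g = {a, b}ᶜ)
    (hab : G.Adj a b) : pmCount (G.restrictAt a {b}) = pmCount (G.comap g) := by
  have hnot : ∀ Q : Set (Sym2 W'), s(a, b) ∉ Sym2.map g '' Q := by
    rintro Q ⟨q, -, hq⟩
    obtain ⟨c, -, hc⟩ := Sym2.mem_map.1 (hq ▸ Sym2.mem_mk_left a b)
    exact apply_notMem_of_range_eq_compl_pair hrange c (hc ▸ Sym2.mem_mk_left a b)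
  simp only [pmCount, isPerfMatchSet_restrictAt_singleton_iff]
  symm
  refine Set.ncard_congr (fun Q _ => insert s(a, b) (Sym2.map g '' Q))
    (fun Q hQ => ⟨hQ.insert_image hg hrange hab, Set.mem_insert _ _⟩)
    (fun Q Q' _ _ h => ?_)
    (fun P ⟨hP, habP⟩ => ⟨_, hP.preimage hg hrange habP, hP.insert_image_preimage hrange habP⟩)
  have h' := congrArg (· \ {s(a, b)}) h
  simp only [Set.insert_sdiff_self_of_notMem (hnot _)] at h'
  exact Set.image_injective.2 (Sym2.map.injective hg) h'

end PerfectMatchings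

section MiddleGraph

variable {V : Type*}

def middleEnds (G : SimpleGraph V) : V ⊕ G.edgeSet → Set V
  | .inl v => {v}
  | .inr e => {v | v ∈ (e : Sym2 V)}

lemma middleGraph_adj_iff {G : SimpleGraph V} {a b : V ⊕ G.edgeSet} :
    (middleGraph G).Adj a b ↔
      a ≠ b ∧ (a.isRight ∨ b.isRight) ∧ (middleEnds G a ∩ middleEnds G b).Nonempty := by
  rcases a with v | e <;> rcases b with w | f <;>
    simp [middleGraph, middleEnds, Set.Nonempty]

end MiddleGraph

section Suppression

variable {V : Type*} {H : SimpleGraph V} {u x y : V} {H' : SimpleGraph {w | w ≠ u}}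
  {f : H'.edgeSet}

def IsDeleteAddEdge (H : SimpleGraph V) (H' : SimpleGraph {w | w ≠ u}) (f : Sym2 {w | w ≠ u}) :
    Prop :=
  ∀ e, e ∈ H'.edgeSet ↔ e.map Subtype.val ∈ H.edgeSet ∨ e = f

noncomputable def subdivideEdge (H' : SimpleGraph {w | w ≠ u}) (eb : H.edgeSet)
    (e : H'.edgeSet) : H.edgeSet :=
  open Classical in
  if h : e.1.map Subtype.val ∈ H.edgeSet then ⟨_, h⟩ else eb

noncomputable def subdivideMap (H' : SimpleGraph {w | w ≠ u}) (eb : H.edgeSet) :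
    {w | w ≠ u} ⊕ H'.edgeSet → V ⊕ H.edgeSet :=
  Sum.map Subtype.val (subdivideEdge H' eb)

lemma notMem_map_subtypeVal (z : Sym2 {w | w ≠ u}) : u ∉ z.map Subtype.val := by
  intro h
  obtain ⟨w, -, hw⟩ := Sym2.mem_map.1 h
  exact w.2 hw

lemma IsDeleteAddEdge.eq_of_map_notMem (hH' : IsDeleteAddEdge H H' f) {e : H'.edgeSet}
    (he : e.1.map Subtype.val ∉ H.edgeSet) : e = f :=
  Subtype.ext (((hH' e).1 e.2).resolve_left he)

lemma subdivideEdge_of_ne (hH' : IsDeleteAddEdge H H' f) {eb : H.edgeSet} {e : H'.edgeSet}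
    (he : e ≠ f) : (subdivideEdge H' eb e).1 = e.1.map Subtype.val := by
  rw [subdivideEdge, dif_pos (not_not.1 (mt hH'.eq_of_map_notMem he))]

lemma subdivideEdge_self (hf : f.1.map Subtype.val = s(x, y)) (hnadj : ¬ H.Adj x y)
    {eb : H.edgeSet} : subdivideEdge H' eb f = eb :=
  dif_neg (hf ▸ hnadj)

lemma subdivideEdge_injective (hH' : IsDeleteAddEdge H H' f) {eb : H.edgeSet} (hub : u ∈ eb.1) :
    Injective (subdivideEdge H' eb) := by
  have hne : ∀ e : H'.edgeSet, ∀ h, (⟨e.1.map Subtype.val, h⟩ : H.edgeSet) ≠ eb :=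
    fun e _ he => notMem_map_subtypeVal e.1 (by rw [← he] at hub; exact hub)
  intro e₁ e₂ h
  unfold subdivideEdge at h
  split_ifs at h with h₁ h₂ h₂
  · exact Subtype.ext (Sym2.map.injective Subtype.val_injective (congrArg Subtype.val h))
  · exact absurd h (hne e₁ h₁)
  · exact absurd h.symm (hne e₂ h₂)
  · rw [hH'.eq_of_map_notMem h₁, hH'.eq_of_map_notMem h₂]

lemma range_subdivideEdge (hH' : IsDeleteAddEdge H H' f) (hf : f.1.map Subtype.val = s(x, y))
    (hnadj : ¬ H.Adj x y) (hxy : x ≠ y) (hnbr : ∀ v, H.Adj u v → v = x ∨ v = y)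
    (hux : H.Adj u x) (huy : H.Adj u y) :
    Set.range (subdivideEdge H' ⟨s(u, y), huy⟩) = {⟨s(u, x), hux⟩}ᶜ := by
  ext g
  simp only [Set.mem_range, Set.mem_compl_iff, Set.mem_singleton_iff]
  constructor
  · rintro ⟨e, rfl⟩ he
    by_cases hef : e = f
    · rw [hef, subdivideEdge_self hf hnadj] at he
      exact hxy (Sym2.congr_right.1 (congrArg Subtype.val he)).symm
    · have hu : u ∈ (subdivideEdge H' ⟨s(u, y), huy⟩ e).1 := by
        rw [he]
        exact Sym2.mem_mk_left u x
      rw [subdivideEdge_of_ne hH' hef] at hu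
      exact notMem_map_subtypeVal _ hu
  · intro hg
    by_cases hug : u ∈ g.1
    · obtain ⟨w, hw⟩ := Sym2.mem_iff_exists.1 hug
      have huw : H.Adj u w := by
        rw [← SimpleGraph.mem_edgeSet, ← hw]
        exact g.2
      rcases hnbr w huw with rfl | rfl
      · exact absurd (Subtype.ext hw) hg
      · exact ⟨f, (subdivideEdge_self hf hnadj).trans (Subtype.ext hw.symm)⟩
    · obtain ⟨e, he⟩ : g.1 ∈ Set.range (Sym2.map (Subtype.val : {w | w ≠ u} → V)) :=
        Sym2.mem_range_map_iff.2 fun w hw => ⟨⟨w, fun h => hug (h ▸ hw)⟩, rfl⟩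
      have heH : e.map Subtype.val ∈ H.edgeSet := he ▸ g.2
      refine ⟨⟨e, (hH' e).2 (Or.inl heH)⟩, ?_⟩
      rw [subdivideEdge, dif_pos heH]
      exact Subtype.ext he

lemma subdivideMap_injective (hH' : IsDeleteAddEdge H H' f) {eb : H.edgeSet} (hub : u ∈ eb.1) :
    Injective (subdivideMap H' eb) :=
  Sum.map_injective.2 ⟨Subtype.val_injective, subdivideEdge_injective hH' hub⟩

lemma range_subdivideMap (hH' : IsDeleteAddEdge H H' f) (hf : f.1.map Subtype.val = s(x, y))
    (hnadj : ¬ H.Adj x y) (hxy : x ≠ y) (hnbr : ∀ v, H.Adj u v → v = x ∨ v = y)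
    (hux : H.Adj u x) (huy : H.Adj u y) :
    Set.range (subdivideMap H' ⟨s(u, y), huy⟩) = {.inl u, .inr ⟨s(u, x), hux⟩}ᶜ := by
  ext (v | g)
  · simp [subdivideMap]
  · simpa [subdivideMap] using
      Set.ext_iff.1 (range_subdivideEdge hH' hf hnadj hxy hnbr hux huy) g

lemma middleEnds_subdivideMap (hH' : IsDeleteAddEdge H H' f) {eb : H.edgeSet}
    {a : {w | w ≠ u} ⊕ H'.edgeSet} (ha : a ≠ .inr f) :
    middleEnds H (subdivideMap H' eb a) = Subtype.val '' middleEnds H' a := by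
  rcases a with v | e
  · exact Set.image_singleton.symm
  · have he : e ≠ f := fun h => ha (h ▸ rfl)
    ext w
    simp [subdivideMap, middleEnds, subdivideEdge_of_ne hH' he, Sym2.mem_map]

lemma middleGraph_adj_subdivideMap_inr_self_iff (hH' : IsDeleteAddEdge H H' f)
    (hf : f.1.map Subtype.val = s(x, y)) (hnadj : ¬ H.Adj x y) (huy : H.Adj u y)
    {b : {w | w ≠ u} ⊕ H'.edgeSet} (hb : b ≠ .inr f) :
    (middleGraph H).Adj (subdivideMap H' ⟨s(u, y), huy⟩ (.inr f))
        (subdivideMap H' ⟨s(u, y), huy⟩ b) ↔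
      (middleGraph H').Adj (.inr f) b ∧ y ∈ Subtype.val '' middleEnds H' b := by
  have hf_ends : middleEnds H (subdivideMap H' ⟨s(u, y), huy⟩ (.inr f)) = {u, y} := by
    ext v
    simp [subdivideMap, subdivideEdge_self hf hnadj, middleEnds]
  have hu : u ∉ Subtype.val '' middleEnds H' b := fun ⟨w, _, hw⟩ => w.2 hw
  rw [middleGraph_adj_iff, middleGraph_adj_iff,
    (subdivideMap_injective hH' (Sym2.mem_mk_left u y)).ne_iff, hf_ends,
    middleEnds_subdivideMap hH' hb]
  constructor
  · rintro ⟨hne, -, v, hv, hvb⟩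
    obtain rfl | rfl := hv
    · exact absurd hvb hu
    · obtain ⟨w', hw'f, hw'⟩ := Sym2.mem_map.1 (hf ▸ Sym2.mem_mk_right x v)
      obtain ⟨w, hwb, hw⟩ := hvb
      exact ⟨⟨hne, Or.inl rfl, w, Subtype.val_injective (hw.trans hw'.symm) ▸ hw'f, hwb⟩,
        ⟨w, hwb, hw⟩⟩
  · rintro ⟨⟨hne, -, -⟩, hyb⟩
    exact ⟨hne, Or.inl rfl, y, Or.inr rfl, hyb⟩

theorem comap_subdivideMap (hH' : IsDeleteAddEdge H H' f) (hf : f.1.map Subtype.val = s(x, y))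
    (hnadj : ¬ H.Adj x y) (huy : H.Adj u y) :
    (middleGraph H).comap (subdivideMap H' ⟨s(u, y), huy⟩) =
      (middleGraph H').restrictAt (.inr f) {b | y ∈ Subtype.val '' middleEnds H' b} := by
  have hinj : Injective (subdivideMap H' ⟨s(u, y), huy⟩) :=
    subdivideMap_injective hH' (Sym2.mem_mk_left u y)
  ext a b
  simp only [comap_adj, restrictAt_adj, Set.mem_ofPred_eq]
  by_cases ha : a = .inr f <;> by_cases hb : b = .inr f
  · subst ha hb
    simp
  · subst ha
    simp [middleGraph_adj_subdivideMap_inr_self_iff hH' hf hnadj huy hb, hb]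
  · subst hb
    rw [adj_comm, middleGraph_adj_subdivideMap_inr_self_iff hH' hf hnadj huy ha, adj_comm]
    simp [ha]
  · rw [middleGraph_adj_iff, middleGraph_adj_iff, hinj.ne_iff, middleEnds_subdivideMap hH' ha,
      middleEnds_subdivideMap hH' hb, ← Set.image_inter Subtype.val_injective, Set.image_nonempty]
    rcases a with _ | _ <;> rcases b with _ | _ <;> simp [ha, hb, subdivideMap]

lemma mem_image_middleEnds_iff_notMem (hf : f.1.map Subtype.val = s(x, y)) (hxy : x ≠ y)
    {b : {w | w ≠ u} ⊕ H'.edgeSet} (hb : (middleGraph H').Adj (.inr f) b) :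
    y ∈ Subtype.val '' middleEnds H' b ↔ x ∉ Subtype.val '' middleEnds H' b := by
  obtain ⟨hne, -, w, hwf, hwb⟩ := middleGraph_adj_iff.1 hb
  refine ⟨?_, fun hx => ?_⟩
  · rintro ⟨wy, hwy, rfl⟩ ⟨wx, hwx, rfl⟩
    rcases b with v | e
    · exact hxy (congrArg Subtype.val (hwx.trans hwy.symm))
    · have hef : e.1.map Subtype.val = f.1.map Subtype.val := by
        rw [hf, ← Sym2.mem_and_mem_iff hxy]
        exact ⟨Sym2.mem_map.2 ⟨wx, hwx, rfl⟩, Sym2.mem_map.2 ⟨wy, hwy, rfl⟩⟩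
      exact hne (congrArg _ (Subtype.ext (Sym2.map.injective Subtype.val_injective hef))).symm
  · have hw : w.1 ∈ s(x, y) := hf ▸ Sym2.mem_map.2 ⟨w, hwf, rfl⟩
    rcases Sym2.mem_iff.1 hw with h | h
    · exact absurd ⟨w, hwb, h⟩ hx
    · exact ⟨w, hwb, h⟩

lemma mem_singleton_iff_notMem_singleton_of_adj_inl (hxy : x ≠ y)
    (hnbr : ∀ v, H.Adj u v → v = x ∨ v = y) (hux : H.Adj u x) (huy : H.Adj u y)
    {b : V ⊕ H.edgeSet} (hb : (middleGraph H).Adj (.inl u) b) :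
    b ∈ ({.inr ⟨s(u, x), hux⟩} : Set (V ⊕ H.edgeSet)) ↔ b ∉ ({.inr ⟨s(u, y), huy⟩} : Set _) := by
  rcases b with v | e
  · exact hb.elim
  obtain ⟨w, hw⟩ := Sym2.mem_iff_exists.1 (show u ∈ e.1 from hb)
  have huw : H.Adj u w := by
    rw [← SimpleGraph.mem_edgeSet, ← hw]
    exact e.2
  have hne : s(u, x) ≠ s(u, y) := fun h => hxy (Sym2.congr_right.1 h)
  rcases hnbr w huw with rfl | rfl <;> simp [Subtype.ext_iff, hw, hne, hne.symm]

end Suppression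

theorem middle_graph_pm_suppress_degree_two_general {V : Type*} [Fintype V]
    (H : SimpleGraph V) [DecidableRel H.Adj] (u x y : V)
    (hux : H.Adj u x) (huy : H.Adj u y) (hdeg : H.degree u = 2)
    (hxy : x ≠ y) (hnadj : ¬ H.Adj x y) :
    pmCount (middleGraph H) =
      pmCount (middleGraph
        (H.induce {w | w ≠ u} ⊔
          SimpleGraph.fromEdgeSet
            {s((⟨x, hux.ne'⟩ : {w | w ≠ u}), (⟨y, huy.ne'⟩ : {w | w ≠ u}))})) := by
  have hnbr : ∀ v, H.Adj u v → v = x ∨ v = y := fun v =>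
    H.eq_or_eq_of_degree_eq_two hdeg hux huy hxy
  have hnbr' : ∀ v, H.Adj u v → v = y ∨ v = x := fun v hv => (hnbr v hv).symm
  have hE := mem_edgeSet_induce_sup_fromEdgeSet_iff (H := H)
    (fun h => hxy (congrArg Subtype.val h) : (⟨x, hux.ne'⟩ : {w | w ≠ u}) ≠ ⟨y, huy.ne'⟩)
  let f : (H.induce {w | w ≠ u} ⊔
      fromEdgeSet {s((⟨x, hux.ne'⟩ : {w | w ≠ u}), ⟨y, huy.ne'⟩)}).edgeSet :=
    ⟨_, (hE _).2 (Or.inr rfl)⟩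
  have hH' : IsDeleteAddEdge H _ f.1 := hE
  have hf : f.1.map Subtype.val = s(x, y) := rfl
  have hf' : f.1.map Subtype.val = s(y, x) := Sym2.eq_swap
  rw [pmCount_eq_add_restrictAt (.inl u)
      (fun _ => mem_singleton_iff_notMem_singleton_of_adj_inl hxy hnbr hux huy),
    pmCount_restrictAt_singleton_eq_comap (subdivideMap_injective hH' (Sym2.mem_mk_left u y))
      (range_subdivideMap hH' hf hnadj hxy hnbr hux huy) (Sym2.mem_mk_left u x),
    pmCount_restrictAt_singleton_eq_comap (subdivideMap_injective hH' (Sym2.mem_mk_left u x))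
      (range_subdivideMap hH' hf' (hnadj ∘ .symm) hxy.symm hnbr' huy hux) (Sym2.mem_mk_left u y),
    comap_subdivideMap hH' hf hnadj huy, comap_subdivideMap hH' hf' (hnadj ∘ .symm) hux]
  exact (pmCount_eq_add_restrictAt _ fun _ => mem_image_middleEnds_iff_notMem hf hxy).symm

/-- If `u` is a vertex of degree `2` in `H` whose two neighbours `x` and
`y` are distinct and non-adjacent, and `H'` is obtained from `H` by deleting `u` and
adding the edge `xy`, then `M(H)` and `M(H')` have the same number of perfect matchings. -/
theorem middle_graph_pm_suppress_degree_two {V : Type*} [Fintype V] [DecidableEq V]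
    (H : SimpleGraph V) [DecidableRel H.Adj] (u x y : V)
    (hux : H.Adj u x) (huy : H.Adj u y) (hdeg : H.degree u = 2)
    (hxy : x ≠ y) (hnadj : ¬ H.Adj x y) :
    pmCount (middleGraph H) =
      pmCount (middleGraph
        (H.induce {w | w ≠ u} ⊔
          SimpleGraph.fromEdgeSet
            {s((⟨x, hux.ne'⟩ : {w | w ≠ u}), (⟨y, huy.ne'⟩ : {w | w ≠ u}))})) :=
  middle_graph_pm_suppress_degree_two_general H u x y hux huy hdeg hxy hnadj
end

section
/- Let G be a connected cubic simple graph with n vertices and m = 3n/2 edges, m even, and let N be a perfect matching of the line graph L(G). For each vertex v of G such that G_v contains an edge of N, say the pair {e1, e2} ⊆ E(G) with e1, e2 incident to v, let e3 be the third edge of G incident to v, and let M'_N be the set of edges {v, e3} of M(G) over all such vertices v. Then M'_N is a matching of M(G) of size 3n/4. -/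
variable {V : Type*}

/-- Given a set `N` of edges of the line graph of `G`, the set `M'_N` of those edges of
`M(G)` of the form `{v, e₃}` where the `K₄`-subgraph `G_v` contains an edge `{e₁, e₂}`
of `N` and `e₃` is the third edge of `G` incident with `v`. -/
def matchEdges (G : SimpleGraph V) (N : Set (Sym2 G.edgeSet)) :
    Set (Sym2 (V ⊕ G.edgeSet)) :=
  {p | ∃ (v : V) (e1 e2 e3 : G.edgeSet), s(e1, e2) ∈ N ∧
    v ∈ (e1 : Sym2 V) ∧ v ∈ (e2 : Sym2 V) ∧ v ∈ (e3 : Sym2 V) ∧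
    e3 ≠ e1 ∧ e3 ≠ e2 ∧ p = s(Sum.inl v, Sum.inr e3)}

/-!
A vertex `v` of a cubic graph has only three edges, so no two disjoint pairs of edges lie in
`G_v`: each `G_v` contains at most one edge of `N`. An edge `q = {e₁, e₂}` of `N` lies in exactly
one `G_v` and determines the third edge `e₃` at `v`, so `q ↦ {v, e₃}` is a bijection from `N`
onto `M'_N`. Two edges `{v, e₃}`, `{w, f₃}` of `M'_N` cannot share `v = w` (one `N`-edge per
`G_v`), nor `e₃ = f₃ = vw`: the `N`-edge covering `e₃` lies in `G_v` or `G_w`, next to the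
`N`-edge that produced `e₃` there. Finally `2|N| = |E(G)| = 3n/2`.
-/

open Finset

namespace SimpleGraph

variable {G : SimpleGraph V}

theorem IsRegularOfDegree.mul_card_eq_two_mul_card_edgeSet [Fintype V] [DecidableRel G.Adj]
    {d : ℕ} (h : G.IsRegularOfDegree d) : d * Fintype.card V = 2 * Nat.card G.edgeSet := by
  classical
  rw [Nat.card_eq_fintype_card, card_edgeSet, ← sum_degrees_eq_twice_card_edges,
    sum_congr rfl fun v _ => h v, sum_const, card_univ, smul_eq_mul, mul_comm]

variable {v : V} [Fintype (G.neighborSet v)]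

theorem card_le_degree_of_forall_mem (s : Finset G.edgeSet) (hs : ∀ e ∈ s, v ∈ (e : Sym2 V)) :
    #s ≤ G.degree v := by
  classical
  rw [← card_incidenceFinset_eq_degree, ← card_map (Function.Embedding.subtype _)]
  refine card_le_card fun e he => ?_
  obtain ⟨e, hes, rfl⟩ := mem_map.1 he
  exact (mem_incidenceFinset _ _ _).2 ⟨e.2, hs e hes⟩

theorem exists_mem_notMem_of_card_lt_degree (s : Finset G.edgeSet) (hs : #s < G.degree v) :
    ∃ e : G.edgeSet, v ∈ (e : Sym2 V) ∧ e ∉ s := by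
  classical
  rw [← card_incidenceFinset_eq_degree, ← card_map (Function.Embedding.subtype _)] at hs
  obtain ⟨e, he, hes⟩ := exists_mem_notMem_of_card_lt_card hs
  rw [mem_incidenceFinset] at he
  exact ⟨⟨e, he.1⟩, he.2, fun h => hes (mem_map_of_mem _ h)⟩

end SimpleGraph

theorem IsPerfMatchSet.two_mul_ncard {W : Type*} [Finite W] {H : SimpleGraph W}
    {P : Set (Sym2 W)} (hP : IsPerfMatchSet H P) : 2 * P.ncard = Nat.card W := by
  classical
  have := Fintype.ofFinite W
  have hcover : (P.toFinite.toFinset.biUnion Sym2.toFinset) = univ := by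
    refine eq_univ_of_forall fun w => ?_
    obtain ⟨p, hp, hw⟩ := hP.2.2 w
    exact mem_biUnion.2 ⟨p, P.toFinite.mem_toFinset.2 hp, Sym2.mem_toFinset.2 hw⟩
  have hdisj : (P.toFinite.toFinset : Set (Sym2 W)).PairwiseDisjoint Sym2.toFinset := by
    intro p hp q hq hpq
    simp only [Set.Finite.coe_toFinset] at hp hq
    exact disjoint_left.2 fun w hwp hwq =>
      hP.2.1 p hp q hq hpq w (Sym2.mem_toFinset.1 hwp) (Sym2.mem_toFinset.1 hwq)
  rw [Nat.card_eq_fintype_card, ← card_univ, ← hcover, card_biUnion hdisj,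
    sum_congr rfl fun p hp => Sym2.card_toFinset_of_not_isDiag p
      (H.not_isDiag_of_mem_edgeSet (hP.1 (P.toFinite.mem_toFinset.1 hp))),
    sum_const, smul_eq_mul, Set.ncard_eq_toFinset_card P, mul_comm]

/-- `q = {e₁, e₂}` lies in `G_v`. -/
def LiesIn {G : SimpleGraph V} (q : Sym2 G.edgeSet) (v : V) : Prop :=
  ∀ e ∈ q, v ∈ (e : Sym2 V)

def IsThirdEdge {G : SimpleGraph V} (q : Sym2 G.edgeSet) (v : V) (e : G.edgeSet) : Prop :=
  LiesIn q v ∧ v ∈ (e : Sym2 V) ∧ e ∉ q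

section LineGraph

variable {G : SimpleGraph V} {q q' : Sym2 G.edgeSet} {v w : V} {e f : G.edgeSet}

theorem liesIn_mk : LiesIn s(e, f) v ↔ v ∈ (e : Sym2 V) ∧ v ∈ (f : Sym2 V) := by
  simp [LiesIn, Sym2.mem_iff]

theorem LiesIn.eq_of_not_isDiag (hq : ¬q.IsDiag) (hv : LiesIn q v) (hw : LiesIn q w) :
    v = w := by
  induction q using Sym2.ind with
  | _ e f =>
    rw [liesIn_mk] at hv hw
    by_contra hvw
    exact hq (Sym2.mk_isDiag_iff.2 (Subtype.ext (Sym2.eq_of_ne_mem hvw hv.1 hw.1 hv.2 hw.2)))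

theorem exists_liesIn_of_mem_edgeSet (hq : q ∈ (lineGraph G).edgeSet) : ∃ v, LiesIn q v := by
  induction q using Sym2.ind with
  | _ e f =>
    obtain ⟨-, v, he, hf⟩ := hq
    exact ⟨v, liesIn_mk.2 ⟨he, hf⟩⟩

variable [Fintype (G.neighborSet v)]

theorem four_le_degree_of_disjoint (hq : ¬q.IsDiag) (hq' : ¬q'.IsDiag)
    (hdisj : ∀ e ∈ q, e ∉ q') (hv : LiesIn q v) (hv' : LiesIn q' v) : 4 ≤ G.degree v := by
  classical
  have hdisj' : Disjoint q.toFinset q'.toFinset :=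
    disjoint_left.2 fun e he he' => hdisj e (Sym2.mem_toFinset.1 he) (Sym2.mem_toFinset.1 he')
  calc 4 = #(q.toFinset ∪ q'.toFinset) := by
        rw [card_union_of_disjoint hdisj', Sym2.card_toFinset_of_not_isDiag _ hq,
          Sym2.card_toFinset_of_not_isDiag _ hq']
    _ ≤ G.degree v := G.card_le_degree_of_forall_mem _ fun e he => by
        rw [mem_union, Sym2.mem_toFinset, Sym2.mem_toFinset] at he
        exact he.elim (hv e) (hv' e)

theorem exists_isThirdEdge (hdeg : 3 ≤ G.degree v) (hv : LiesIn q v) :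
    ∃ e, IsThirdEdge q v e := by
  classical
  obtain ⟨e, hve, he⟩ := G.exists_mem_notMem_of_card_lt_degree (v := v) q.toFinset
    (by rw [Sym2.card_toFinset]; split_ifs <;> omega)
  exact ⟨e, hv, hve, fun h => he (Sym2.mem_toFinset.2 h)⟩

theorem IsThirdEdge.unique (hdeg : G.degree v ≤ 3) (hq : ¬q.IsDiag) (he : IsThirdEdge q v e)
    (hf : IsThirdEdge q v f) : e = f := by
  by_contra hef
  have hdisj : ∀ x ∈ q, x ∉ s(e, f) := by
    intro x hx hxef
    rcases Sym2.mem_iff.1 hxef with rfl | rfl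
    exacts [he.2.2 hx, hf.2.2 hx]
  have := four_le_degree_of_disjoint hq (Sym2.mk_isDiag_iff.not.2 hef) hdisj he.1
    (liesIn_mk.2 ⟨he.2.1, hf.2.1⟩)
  omega

variable {N : Set (Sym2 G.edgeSet)}

theorem IsPerfMatchSet.eq_of_liesIn (hN : IsPerfMatchSet (lineGraph G) N)
    (hdeg : G.degree v ≤ 3) (hq : q ∈ N) (hq' : q' ∈ N) (hv : LiesIn q v) (hv' : LiesIn q' v) :
    q = q' := by
  by_contra hne
  have := four_le_degree_of_disjoint ((lineGraph G).not_isDiag_of_mem_edgeSet (hN.1 hq))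
    ((lineGraph G).not_isDiag_of_mem_edgeSet (hN.1 hq')) (hN.2.1 q hq q' hq' hne) hv hv'
  omega

theorem IsThirdEdge.not_liesIn_of_mem (hN : IsPerfMatchSet (lineGraph G) N)
    (hdeg : G.degree v ≤ 3) (hq : q ∈ N) (he : IsThirdEdge q v e) (hq' : q' ∈ N) (heq' : e ∈ q') :
    ¬LiesIn q' v := fun hv' => he.2.2 (hN.eq_of_liesIn hdeg hq hq' he.1 hv' ▸ heq')

end LineGraph

section MatchEdges

variable {G : SimpleGraph V} {N : Set (Sym2 G.edgeSet)}

theorem mem_matchEdges_iff {p : Sym2 (V ⊕ G.edgeSet)} :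
    p ∈ matchEdges G N ↔
      ∃ q ∈ N, ∃ v e, IsThirdEdge q v e ∧ p = s(Sum.inl v, Sum.inr e) := by
  constructor
  · rintro ⟨v, e₁, e₂, e, hq, h₁, h₂, hve, he₁, he₂, rfl⟩
    exact ⟨_, hq, v, e, ⟨liesIn_mk.2 ⟨h₁, h₂⟩, hve, by simp [Sym2.mem_iff, he₁, he₂]⟩, rfl⟩
  · rintro ⟨q, hq, v, e, ⟨hv, hve, heq⟩, rfl⟩
    induction q using Sym2.ind with
    | _ e₁ e₂ =>
      rw [liesIn_mk] at hv
      simp only [Sym2.mem_iff, not_or] at heq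
      exact ⟨v, e₁, e₂, e, hq, hv.1, hv.2, hve, heq.1, heq.2, rfl⟩

theorem matchEdges_subset_edgeSet : matchEdges G N ⊆ (middleGraph G).edgeSet := by
  rintro p ⟨v, -, -, e, -, -, -, hve, -, -, rfl⟩
  exact hve

variable [G.LocallyFinite]

theorem matchEdges_pairwise_disjoint (hdeg : ∀ v, G.degree v ≤ 3)
    (hN : IsPerfMatchSet (lineGraph G) N) :
    ∀ p ∈ matchEdges G N, ∀ p' ∈ matchEdges G N, p ≠ p' → ∀ a, a ∈ p → a ∉ p' := by
  simp only [mem_matchEdges_iff]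
  rintro _ ⟨q, hq, v, e, he, rfl⟩ _ ⟨q', hq', w, e', he', rfl⟩ hne a ha ha'
  rw [Sym2.mem_iff] at ha ha'
  rcases ha with rfl | rfl <;> rcases ha' with h | h <;> cases h
  · obtain rfl := hN.eq_of_liesIn (hdeg v) hq hq' he.1 he'.1
    exact hne (by rw [he.unique (hdeg v) ((lineGraph G).not_isDiag_of_mem_edgeSet (hN.1 hq)) he'])
  · have hvw : v ≠ w := by rintro rfl; exact hne rfl
    obtain ⟨r, hr, her⟩ := hN.2.2 e
    obtain ⟨x, hx⟩ := exists_liesIn_of_mem_edgeSet (hN.1 hr)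
    have hxe : x ∈ (e : Sym2 V) := hx e her
    rw [(Sym2.mem_and_mem_iff hvw).1 ⟨he.2.1, he'.2.1⟩, Sym2.mem_iff] at hxe
    rcases hxe with rfl | rfl
    exacts [he.not_liesIn_of_mem hN (hdeg x) hq hr her hx,
      he'.not_liesIn_of_mem hN (hdeg x) hq' hr her hx]

theorem ncard_matchEdges (hcubic : G.IsRegularOfDegree 3) (hN : IsPerfMatchSet (lineGraph G) N) :
    (matchEdges G N).ncard = N.ncard := by
  have hthird (q : Sym2 G.edgeSet) (hq : q ∈ N) : ∃ x : V × G.edgeSet, IsThirdEdge q x.1 x.2 := by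
    obtain ⟨v, hv⟩ := exists_liesIn_of_mem_edgeSet (hN.1 hq)
    obtain ⟨e, he⟩ := exists_isThirdEdge (hcubic v).ge hv
    exact ⟨(v, e), he⟩
  choose x hx using hthird
  refine (Set.ncard_congr (fun q hq => s(Sum.inl (x q hq).1, Sum.inr (x q hq).2))
    (fun q hq => mem_matchEdges_iff.2 ⟨q, hq, _, _, hx q hq, rfl⟩) ?_ ?_).symm
  · intro q q' hq hq' h
    simp only [Sym2.eq_iff, Sum.inl.injEq, Sum.inr.injEq, reduceCtorEq, and_false, or_false] at h
    exact hN.eq_of_liesIn (hcubic _).le hq hq' (hx q hq).1 (by rw [h.1]; exact (hx q' hq').1)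
  · intro p hp
    obtain ⟨q, hq, v, e, he, rfl⟩ := mem_matchEdges_iff.1 hp
    have hqd := (lineGraph G).not_isDiag_of_mem_edgeSet (hN.1 hq)
    have hv : (x q hq).1 = v := (hx q hq).1.eq_of_not_isDiag hqd he.1
    have he' : (x q hq).2 = e := IsThirdEdge.unique (hcubic v).le hqd (hv ▸ hx q hq) he
    exact ⟨q, hq, by rw [hv, he']⟩

end MatchEdges

theorem matchEdges_is_matching_general {V : Type*} [Fintype V]
    (G : SimpleGraph V) [DecidableRel G.Adj]
    (hcubic : G.IsRegularOfDegree 3)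
    (N : Set (Sym2 G.edgeSet)) (hN : IsPerfMatchSet (lineGraph G) N) :
    matchEdges G N ⊆ (middleGraph G).edgeSet ∧
    (∀ p ∈ matchEdges G N, ∀ q ∈ matchEdges G N, p ≠ q → ∀ a, a ∈ p → a ∉ q) ∧
    (matchEdges G N).ncard = 3 * Fintype.card V / 4 := by
  refine ⟨matchEdges_subset_edgeSet, matchEdges_pairwise_disjoint (fun v => (hcubic v).le) hN, ?_⟩
  have hNcard := hN.two_mul_ncard
  have hEcard := hcubic.mul_card_eq_two_mul_card_edgeSet
  rw [ncard_matchEdges hcubic hN]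
  omega

/-- Let `G` be a connected cubic graph with `n` vertices and an even
number of edges, and `N` a perfect matching of `L(G)`.  Then the set `M'_N` of edges
`{v, e₃}` of `M(G)`, over all vertices `v` whose `K₄`-subgraph `G_v` contains an edge
`{e₁, e₂}` of `N` (with `e₃` the third edge incident with `v`), is a matching of `M(G)`
of size `3n/4`. -/
theorem matchEdges_is_matching {V : Type*} [Fintype V] [DecidableEq V]
    (G : SimpleGraph V) [DecidableRel G.Adj]
    (hconn : G.Connected) (hcubic : G.IsRegularOfDegree 3)
    (heven : Even G.edgeFinset.card)
    (N : Set (Sym2 G.edgeSet)) (hN : IsPerfMatchSet (lineGraph G) N) :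
    matchEdges G N ⊆ (middleGraph G).edgeSet ∧
    (∀ p ∈ matchEdges G N, ∀ q ∈ matchEdges G N, p ≠ q → ∀ a, a ∈ p → a ∉ q) ∧
    (matchEdges G N).ncard = 3 * Fintype.card V / 4 :=
  matchEdges_is_matching_general G hcubic N hN
end

section
/- Let G be a connected cubic simple graph with n vertices and m = 3n/2 edges, m even, and let M* be a perfect matching of the vertex-edge graph M(G). Let B be the set of vertices v of G such that the K4-subgraph G_v contains exactly one edge of M*; for each v ∈ B this unique edge joins the v-vertex v to one of its incident edges, say e_{v,3}, and let e_{v,1}, e_{v,2} be the other two edges of G incident to v. Then the set { {e_{v,1}, e_{v,2}} : v ∈ B } is a perfect matching of the line graph L(G). -/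
variable {V : Type*}

/-- For a vertex `v` of `G`, the set of vertices of the middle graph `M(G)` consisting of
the `v`-vertex `v` together with the `e`-vertices corresponding to the edges of `G`
incident with `v`.  For a cubic graph this induces a `K₄` in `M(G)`, denoted `G_v`. -/
def K4set (G : SimpleGraph V) (v : V) : Set (V ⊕ G.edgeSet) :=
  {a | a = Sum.inl v ∨ ∃ e : G.edgeSet, v ∈ (e : Sym2 V) ∧ a = Sum.inr e}

/-! The partner of a `v`-vertex in `P` is an edge `e₃ ∋ v`, so `G_v` contains exactly one edge
of `P` iff the other two edges at `v` are matched outside `G_v`, and in a cubic graph this holds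
as soon as one of them is. Every neighbour of an `e`-vertex `f = uw` in `M(G)` lies in `G_u` or in
`G_w`; the partner of `f` lies outside one of them, say `G_w`, so `w ∈ B` and `f` lies in the pair
at `w`. An edge `a = vw` cannot lie in pairs at two vertices `v ≠ w` of `B`, since its partner
would then lie outside both `G_v` and `G_w`; and the pair at a single vertex is determined by it. -/

section Cubic

variable {G : SimpleGraph V} [G.LocallyFinite]

theorem SimpleGraph.ncard_incidenceSet_eq_degree (v : V) :
    (G.incidenceSet v).ncard = G.degree v := by
  classical
  rw [← Nat.card_coe_set_eq, Nat.card_congr (G.incidenceSetEquivNeighborSet v),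
    Nat.card_eq_fintype_card, card_neighborSet_eq_degree]

theorem SimpleGraph.IsRegularOfDegree.exists_third_edge (hcubic : G.IsRegularOfDegree 3)
    {v : V} {e1 e2 : G.edgeSet} (h1 : v ∈ (e1 : Sym2 V)) (h2 : v ∈ (e2 : Sym2 V))
    (hne : e1 ≠ e2) :
    ∃ e3 : G.edgeSet, v ∈ (e3 : Sym2 V) ∧ e3 ≠ e1 ∧ e3 ≠ e2 ∧
      ∀ g : G.edgeSet, v ∈ (g : Sym2 V) → g = e1 ∨ g = e2 ∨ g = e3 := by
  set S : Set G.edgeSet := {e | v ∈ (e : Sym2 V)}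
  have hS : S.ncard = 3 := by
    have : Subtype.val '' S = G.incidenceSet v := by
      ext e
      simp [S, SimpleGraph.incidenceSet, and_comm]
    rw [← Set.ncard_image_of_injective S Subtype.val_injective, this,
      G.ncard_incidenceSet_eq_degree, hcubic v]
  have hsub : {e1, e2} ⊆ S := Set.insert_subset h1 (Set.singleton_subset_iff.mpr h2)
  have hdiff : (S \ {e1, e2}).ncard = 1 := by
    rw [Set.ncard_sdiff hsub, hS, Set.ncard_pair hne]
  obtain ⟨e3, he3⟩ := Set.ncard_eq_one.mp hdiff
  have he3S : e3 ∈ S \ {e1, e2} := he3 ▸ rfl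
  simp only [Set.mem_sdiff, Set.mem_insert_iff, Set.mem_singleton_iff, not_or] at he3S
  refine ⟨e3, he3S.1, he3S.2.1, he3S.2.2, fun g hg => ?_⟩
  by_cases hg12 : g ∈ ({e1, e2} : Set G.edgeSet)
  · simpa [or_assoc] using Or.inl hg12
  · exact Or.inr (Or.inr (Set.mem_singleton_iff.mp (he3 ▸ ⟨hg, hg12⟩)))

theorem SimpleGraph.IsRegularOfDegree.eq_or_eq_of_ne (hcubic : G.IsRegularOfDegree 3)
    {v : V} {e1 e2 e3 g : G.edgeSet}
    (h1 : v ∈ (e1 : Sym2 V)) (h2 : v ∈ (e2 : Sym2 V)) (h3 : v ∈ (e3 : Sym2 V))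
    (h12 : e1 ≠ e2) (h13 : e1 ≠ e3) (h23 : e2 ≠ e3) (hg : v ∈ (g : Sym2 V)) (hg3 : g ≠ e3) :
    g = e1 ∨ g = e2 := by
  obtain ⟨t, -, -, -, hall⟩ := hcubic.exists_third_edge h1 h2 h12
  obtain rfl : e3 = t := (hall e3 h3).resolve_left h13.symm |>.resolve_left h23.symm
  exact (hall g hg).imp_right (Or.resolve_right · hg3)

end Cubic

def edgesWithin {W : Type*} (P : Set (Sym2 W)) (S : Set W) : Set (Sym2 W) :=
  {p ∈ P | ∀ a ∈ p, a ∈ S}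

theorem notMem_of_ncard_edgesWithin_eq_one {W : Type*} {P : Set (Sym2 W)} {S : Set W}
    (hS : (edgesWithin P S).ncard = 1) {x y z w : W} (hxy : s(x, y) ∈ P) (hx : x ∈ S)
    (hy : y ∈ S) (hzw : s(z, w) ∈ P) (hz : z ∈ S) (hzx : z ≠ x) (hzy : z ≠ y) : w ∉ S := by
  intro hw
  have hmem : ∀ {a b : W}, s(a, b) ∈ P → a ∈ S → b ∈ S → s(a, b) ∈ edgesWithin P S :=
    fun hab ha hb => ⟨hab, fun c hc => by rcases Sym2.mem_iff.mp hc with rfl | rfl <;> assumption⟩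
  obtain ⟨c, hc⟩ := Set.ncard_eq_one.mp hS
  have heq : s(z, w) = s(x, y) :=
    (hc ▸ hmem hzw hz hw : _ ∈ ({c} : Set _)).trans (hc ▸ hmem hxy hx hy : _ ∈ ({c} : Set _)).symm
  rcases Sym2.mem_iff.mp (heq ▸ Sym2.mem_mk_left z w) with h | h
  exacts [hzx h, hzy h]

namespace IsPerfMatchSet

variable {W : Type*} {H : SimpleGraph W} {P : Set (Sym2 W)}

theorem eq_of_mem_of_mem (hP : IsPerfMatchSet H P) {x : W} {p q : Sym2 W} (hp : p ∈ P)
    (hq : q ∈ P) (hxp : x ∈ p) (hxq : x ∈ q) : p = q :=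
  by_contra fun hne => hP.2.1 p hp q hq hne x hxp hxq

theorem exists_adj_mk_mem (hP : IsPerfMatchSet H P) (x : W) :
    ∃ y, H.Adj x y ∧ s(x, y) ∈ P := by
  obtain ⟨p, hp, hxp⟩ := hP.2.2 x
  obtain ⟨y, rfl⟩ := Sym2.mem_iff_exists.mp hxp
  exact ⟨y, hP.1 hp, hp⟩

theorem edgesWithin_eq_singleton (hP : IsPerfMatchSet H P) {S : Set W} {x y z t w : W}
    (hS : ∀ a ∈ S, a = x ∨ a = y ∨ a = z ∨ a = t) (hxy : s(x, y) ∈ P) (hx : x ∈ S)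
    (hy : y ∈ S) (hzw : s(z, w) ∈ P) (hw : w ∉ S) :
    edgesWithin P S = {s(x, y)} := by
  ext p
  refine ⟨fun ⟨hp, hpS⟩ => ?_, ?_⟩
  · by_contra hne
    have hpt : ∀ c ∈ p, c = t := by
      intro c hc
      rcases hS c (hpS c hc) with rfl | rfl | rfl | h
      · exact absurd (hP.eq_of_mem_of_mem hp hxy hc (Sym2.mem_mk_left _ _)) hne
      · exact absurd (hP.eq_of_mem_of_mem hp hxy hc (Sym2.mem_mk_right _ _)) hne
      · exact absurd (hpS w (hP.eq_of_mem_of_mem hzw hp (Sym2.mem_mk_left _ _) hc ▸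
          Sym2.mem_mk_right _ _)) hw
      · exact h
    induction p using Sym2.ind with
    | _ a b => exact (hP.1 hp).ne ((hpt a (Sym2.mem_mk_left a b)).trans
        (hpt b (Sym2.mem_mk_right a b)).symm)
  · rintro rfl
    exact ⟨hxy, fun c hc => by rcases Sym2.mem_iff.mp hc with rfl | rfl <;> assumption⟩

end IsPerfMatchSet

section MiddleGraph

variable {G : SimpleGraph V} {P : Set (Sym2 (V ⊕ G.edgeSet))}

@[simp]
theorem inl_mem_K4set {u v : V} : (Sum.inl u : V ⊕ G.edgeSet) ∈ K4set G v ↔ u = v := by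
  simp [K4set]

@[simp]
theorem inr_mem_K4set {e : G.edgeSet} {v : V} :
    (Sum.inr e : V ⊕ G.edgeSet) ∈ K4set G v ↔ v ∈ (e : Sym2 V) := by
  simp [K4set]

theorem middleGraph_exists_mem_K4set_of_adj {a : G.edgeSet} {y : V ⊕ G.edgeSet}
    (h : (middleGraph G).Adj (Sum.inr a) y) : ∃ u ∈ (a : Sym2 V), y ∈ K4set G u := by
  cases y with
  | inl u => exact ⟨u, h, inl_mem_K4set.mpr rfl⟩
  | inr g =>
    obtain ⟨-, u, hua, hug⟩ := h
    exact ⟨u, hua, inr_mem_K4set.mpr hug⟩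

theorem middleGraph_exists_notMem_K4set_of_adj {f : G.edgeSet} {y : V ⊕ G.edgeSet}
    (h : (middleGraph G).Adj (Sum.inr f) y) : ∃ w ∈ (f : Sym2 V), y ∉ K4set G w := by
  by_contra! hall
  obtain ⟨u, hu, -⟩ := middleGraph_exists_mem_K4set_of_adj h
  obtain ⟨w, hf⟩ := Sym2.mem_iff_exists.mp hu
  have huw : u ≠ w := (G.mem_edgeSet.mp (hf ▸ f.2)).ne
  have hw : w ∈ (f : Sym2 V) := hf ▸ Sym2.mem_mk_right u w
  cases y with
  | inl x =>
    exact huw ((inl_mem_K4set.mp (hall u hu)).symm.trans (inl_mem_K4set.mp (hall w hw)))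
  | inr g =>
    have hg : (g : Sym2 V) = s(u, w) :=
      (Sym2.mem_and_mem_iff huw).mp ⟨inr_mem_K4set.mp (hall u hu), inr_mem_K4set.mp (hall w hw)⟩
    exact h.1 (Subtype.ext (hf.trans hg.symm))

theorem IsPerfMatchSet.exists_mk_inl_inr_mem (hP : IsPerfMatchSet (middleGraph G) P) (v : V) :
    ∃ e : G.edgeSet, v ∈ (e : Sym2 V) ∧ s(Sum.inl v, Sum.inr e) ∈ P := by
  obtain ⟨y | e, hadj, hp⟩ := hP.exists_adj_mk_mem (Sum.inl v)
  · exact hadj.elim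
  · exact ⟨e, hadj, hp⟩

theorem mate_notMem_K4set {v : V} {a e3 : G.edgeSet} {y : V ⊕ G.edgeSet}
    (hv : (edgesWithin P (K4set G v)).ncard = 1) (hm : s(Sum.inl v, Sum.inr e3) ∈ P)
    (hve3 : v ∈ (e3 : Sym2 V)) (hva : v ∈ (a : Sym2 V)) (hae : a ≠ e3)
    (hp : s(Sum.inr a, y) ∈ P) : y ∉ K4set G v :=
  notMem_of_ncard_edgesWithin_eq_one hv hm (by simp) (by simpa) hp (by simpa) (by simp)
    (by simpa)

theorem IsPerfMatchSet.eq_of_mem_of_ne_mate (hP : IsPerfMatchSet (middleGraph G) P)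
    {v w : V} {a e3 f3 : G.edgeSet}
    (hv : (edgesWithin P (K4set G v)).ncard = 1) (hmv : s(Sum.inl v, Sum.inr e3) ∈ P)
    (hve3 : v ∈ (e3 : Sym2 V)) (hva : v ∈ (a : Sym2 V)) (hae : a ≠ e3)
    (hw : (edgesWithin P (K4set G w)).ncard = 1) (hmw : s(Sum.inl w, Sum.inr f3) ∈ P)
    (hwf3 : w ∈ (f3 : Sym2 V)) (hwa : w ∈ (a : Sym2 V)) (haf : a ≠ f3) : v = w := by
  by_contra hvw
  obtain ⟨y, hadj, hp⟩ := hP.exists_adj_mk_mem (Sum.inr a)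
  obtain ⟨u, hu, hyu⟩ := middleGraph_exists_mem_K4set_of_adj hadj
  rw [(Sym2.mem_and_mem_iff hvw).mp ⟨hva, hwa⟩] at hu
  rcases Sym2.mem_iff.mp hu with rfl | rfl
  exacts [mate_notMem_K4set hv hmv hve3 hva hae hp hyu,
    mate_notMem_K4set hw hmw hwf3 hwa haf hp hyu]

end MiddleGraph

section InducedLineMatching

variable {G : SimpleGraph V} {P : Set (Sym2 (V ⊕ G.edgeSet))}

variable (G P) in
def inducedLineMatching : Set (Sym2 G.edgeSet) :=
  {q : Sym2 G.edgeSet | ∃ (v : V) (e1 e2 e3 : G.edgeSet),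
    v ∈ (e1 : Sym2 V) ∧ v ∈ (e2 : Sym2 V) ∧ v ∈ (e3 : Sym2 V) ∧
    e1 ≠ e2 ∧ e1 ≠ e3 ∧ e2 ≠ e3 ∧
    s(Sum.inl v, Sum.inr e3) ∈ P ∧
    (edgesWithin P (K4set G v)).ncard = 1 ∧
    q = s(e1, e2)}

theorem inducedLineMatching_subset_edgeSet :
    inducedLineMatching G P ⊆ (lineGraph G).edgeSet := by
  rintro q ⟨v, e1, e2, -, h1, h2, -, h12, -, -, -, -, rfl⟩
  exact ⟨h12, v, h1, h2⟩

theorem inducedLineMatching_disjoint [G.LocallyFinite] (hcubic : G.IsRegularOfDegree 3)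
    (hP : IsPerfMatchSet (middleGraph G) P) :
    ∀ p ∈ inducedLineMatching G P, ∀ q ∈ inducedLineMatching G P, p ≠ q →
      ∀ a, a ∈ p → a ∉ q := by
  rintro p ⟨v, e1, e2, e3, h1, h2, h3, h12, h13, h23, hmv, hv, rfl⟩
    q ⟨w, f1, f2, f3, g1, g2, g3, g12, g13, g23, hmw, hw, rfl⟩ hne a hap haq
  have hav : v ∈ (a : Sym2 V) ∧ a ≠ e3 := by
    rcases Sym2.mem_iff.mp hap with rfl | rfl
    exacts [⟨h1, h13⟩, ⟨h2, h23⟩]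
  have haw : w ∈ (a : Sym2 V) ∧ a ≠ f3 := by
    rcases Sym2.mem_iff.mp haq with rfl | rfl
    exacts [⟨g1, g13⟩, ⟨g2, g23⟩]
  obtain rfl : v = w :=
    hP.eq_of_mem_of_ne_mate hv hmv h3 hav.1 hav.2 hw hmw g3 haw.1 haw.2
  obtain rfl : e3 = f3 := Sum.inr.inj <| Sym2.congr_right.mp <|
    hP.eq_of_mem_of_mem hmv hmw (Sym2.mem_mk_left _ _) (Sym2.mem_mk_left _ _)
  apply hne
  rcases hcubic.eq_or_eq_of_ne h1 h2 h3 h12 h13 h23 g1 g13 with rfl | rfl <;>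
    rcases hcubic.eq_or_eq_of_ne h1 h2 h3 h12 h13 h23 g2 g23 with rfl | rfl
  exacts [absurd rfl g12, rfl, Sym2.eq_swap, absurd rfl g12]

theorem exists_mem_inducedLineMatching [G.LocallyFinite] (hcubic : G.IsRegularOfDegree 3)
    (hP : IsPerfMatchSet (middleGraph G) P) (f : G.edgeSet) :
    ∃ q ∈ inducedLineMatching G P, f ∈ q := by
  obtain ⟨y, hadj, hp⟩ := hP.exists_adj_mk_mem (Sum.inr f)
  obtain ⟨w, hwf, hy⟩ := middleGraph_exists_notMem_K4set_of_adj hadj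
  obtain ⟨e3, hwe3, hm⟩ := hP.exists_mk_inl_inr_mem w
  have hfe3 : f ≠ e3 := by
    rintro rfl
    have := hP.eq_of_mem_of_mem hp hm (Sym2.mem_mk_left _ _) (Sym2.mem_mk_right _ _)
    rcases Sym2.mem_iff.mp (this ▸ Sym2.mem_mk_right _ _ : y ∈ s(Sum.inl w, Sum.inr f))
      with rfl | rfl <;> simp_all
  obtain ⟨h, hwh, hhf, hhe3, hall⟩ := hcubic.exists_third_edge hwf hwe3 hfe3
  have hK4 : ∀ a ∈ K4set G w,
      a = Sum.inl w ∨ a = Sum.inr e3 ∨ a = Sum.inr f ∨ a = Sum.inr h := by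
    rintro (u | g) hg
    · exact Or.inl (by simpa using hg)
    · rcases hall g (by simpa using hg) with rfl | rfl | rfl <;> simp
  refine ⟨s(f, h), ⟨w, f, h, e3, hwf, hwh, hwe3, hhf.symm, hfe3, hhe3, hm, ?_, rfl⟩,
    Sym2.mem_mk_left _ _⟩
  rw [hP.edgesWithin_eq_singleton hK4 hm (by simp) (by simpa) hp hy, Set.ncard_singleton]

end InducedLineMatching

theorem middle_graph_pm_induces_line_graph_pm_general {V : Type*} [Fintype V]
    (G : SimpleGraph V) [DecidableRel G.Adj]
    (hcubic : G.IsRegularOfDegree 3)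
    (P : Set (Sym2 (V ⊕ G.edgeSet))) (hP : IsPerfMatchSet (middleGraph G) P) :
    IsPerfMatchSet (lineGraph G)
      {q : Sym2 G.edgeSet | ∃ (v : V) (e1 e2 e3 : G.edgeSet),
        v ∈ (e1 : Sym2 V) ∧ v ∈ (e2 : Sym2 V) ∧ v ∈ (e3 : Sym2 V) ∧
        e1 ≠ e2 ∧ e1 ≠ e3 ∧ e2 ≠ e3 ∧
        s(Sum.inl v, Sum.inr e3) ∈ P ∧
        {p ∈ P | ∀ a ∈ p, a ∈ K4set G v}.ncard = 1 ∧
        q = s(e1, e2)} :=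
  ⟨inducedLineMatching_subset_edgeSet, inducedLineMatching_disjoint hcubic hP,
    exists_mem_inducedLineMatching hcubic hP⟩

/-- Let `G` be a connected cubic graph with an even number of edges and
`P` a perfect matching of `M(G)`.  For each vertex `v` whose `K₄`-subgraph `G_v` contains
exactly one edge of `P`, this unique edge joins `v` to an incident edge `e₃`; letting
`e₁, e₂` be the other two edges of `G` incident with `v`, the set of all pairs
`{e₁, e₂}` so obtained is a perfect matching of the line graph `L(G)`. -/
theorem middle_graph_pm_induces_line_graph_pm {V : Type*} [Fintype V] [DecidableEq V]
    (G : SimpleGraph V) [DecidableRel G.Adj]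
    (hconn : G.Connected) (hcubic : G.IsRegularOfDegree 3)
    (heven : Even G.edgeFinset.card)
    (P : Set (Sym2 (V ⊕ G.edgeSet))) (hP : IsPerfMatchSet (middleGraph G) P) :
    IsPerfMatchSet (lineGraph G)
      {q : Sym2 G.edgeSet | ∃ (v : V) (e1 e2 e3 : G.edgeSet),
        v ∈ (e1 : Sym2 V) ∧ v ∈ (e2 : Sym2 V) ∧ v ∈ (e3 : Sym2 V) ∧
        e1 ≠ e2 ∧ e1 ≠ e3 ∧ e2 ≠ e3 ∧
        s(Sum.inl v, Sum.inr e3) ∈ P ∧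
        {p ∈ P | ∀ a ∈ p, a ∈ K4set G v}.ncard = 1 ∧
        q = s(e1, e2)} :=
  middle_graph_pm_induces_line_graph_pm_general G hcubic P hP
end
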